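/- arXiv:1709.01918 — 7 statements merged into one kernel-verified Lean document; each statement's English description precedes it below -/
import Mathlib

section
/- In a dense linear order without endpoints (a model of DLO, e.g. ℚ), define for finite sets A, B, C: A ⫫_C B iff A ∩ B ⊆ C and for all a ∈ A \ C, b ∈ B \ C realizing the same cut over C (i.e., for all c ∈ C, a < c ↔ b < c), one has a < b. Then this relation satisfies transitivity: if A ⫫_{D ∪ C} B and D ⫫_C B, then A ∪ D ⫫_C B. -/
/-- `a` and `b` realize the same cut over the finite set `C`. -/
def sameCutQ (C : Finset ℚ) (a b : ℚ) : Prop :=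
  ∀ c ∈ C, (a < c ↔ b < c) ∧ (c < a ↔ c < b)

/-- The canonical independence relation on finite subsets of `(ℚ, <)`. -/
def indQ (A C B : Finset ℚ) : Prop :=
  A ∩ B ⊆ C ∧ ∀ a ∈ A, a ∉ C → ∀ b ∈ B, b ∉ C → sameCutQ C a b → a < b

/-!
Let `a ∈ (A ∪ D) \ C` and `b ∈ B \ C` have the same cut over `C`; only `a ∈ A \ D` needs work.
If `b ≤ a`, no `d ∈ D \ C` lies in `[b, a]`: such a `d` has the cut of `b` over `C`, so `D ⫫_C B`
would force `d < b`. Hence `a` and `b` have the same cut over `D ∪ C`, and `A ⫫_{D ∪ C} B` gives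
`a < b`, a contradiction.
-/

theorem sameCutQ_union {C D : Finset ℚ} {a b : ℚ} :
    sameCutQ (D ∪ C) a b ↔ sameCutQ D a b ∧ sameCutQ C a b := by
  simp only [sameCutQ, Finset.forall_mem_union]

theorem sameCutQ_of_forall_notMem_Icc {C : Finset ℚ} {a b : ℚ} (hba : b ≤ a)
    (h : ∀ c ∈ C, c ∉ Set.Icc b a) : sameCutQ C a b := by
  intro c hc
  have := h c hc
  simp only [Set.mem_Icc, not_and_or, not_le] at this
  rcases this with hcb | hac
  · exact ⟨⟨fun _ => by linarith, fun _ => by linarith⟩, ⟨fun _ => hcb, fun _ => by linarith⟩⟩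
  · exact ⟨⟨fun _ => by linarith, fun _ => hac⟩, ⟨fun _ => by linarith, fun _ => by linarith⟩⟩

theorem sameCutQ.of_mem_Icc {C : Finset ℚ} {a b x : ℚ} (h : sameCutQ C a b)
    (hx : x ∈ Set.Icc b a) : sameCutQ C x b := by
  intro c hc
  obtain ⟨hbx, hxa⟩ := hx
  obtain ⟨hlt, hgt⟩ := h c hc
  constructor <;> constructor <;> intro <;> grind

theorem union_inter_subset_of_inter_subset_union {A B C D : Finset ℚ} (hAB : A ∩ B ⊆ D ∪ C)
    (hDB : D ∩ B ⊆ C) : (A ∪ D) ∩ B ⊆ C := by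
  rw [Finset.union_inter_distrib_right]
  refine Finset.union_subset (fun x hx => ?_) hDB
  rcases Finset.mem_union.1 (hAB hx) with hxD | hxC
  · exact hDB (Finset.mem_inter.2 ⟨hxD, (Finset.mem_inter.1 hx).2⟩)
  · exact hxC

/-- Transitivity of the DLO independence relation. -/
theorem stmt_5 (A B C D : Finset ℚ) (h1 : indQ A (D ∪ C) B) (h2 : indQ D C B) :
    indQ (A ∪ D) C B := by
  obtain ⟨hAB, hA⟩ := h1
  obtain ⟨hDB, hD⟩ := h2
  refine ⟨union_inter_subset_of_inter_subset_union hAB hDB, fun a ha haC b hb hbC hab => ?_⟩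
  by_cases haD : a ∈ D
  · exact hD a haD haC b hb hbC hab
  have haA : a ∈ A := by simpa [haD] using ha
  have hbD : b ∉ D := fun hbD => hbC (hDB (Finset.mem_inter.2 ⟨hbD, hb⟩))
  by_contra! hba
  have hsep : ∀ d ∈ D \ C, d ∉ Set.Icc b a := by
    intro d hd hdba
    obtain ⟨hdD, hdC⟩ := Finset.mem_sdiff.1 hd
    exact (hD d hdD hdC b hb hbC (hab.of_mem_Icc hdba)).not_ge hdba.1
  have hcut : sameCutQ (D ∪ C) a b := by
    rw [← Finset.sdiff_union_self_eq_union, sameCutQ_union]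
    exact ⟨sameCutQ_of_forall_notMem_Icc hba hsep, hab⟩
  exact (hA a haA (by simp [haD, haC]) b hb (by simp [hbD, hbC]) hcut).not_ge hba
end

section
/- Let (M, <, ∧) be a meet-tree (a partial order in which the set of elements below any element is linearly ordered, with a binary meet operation giving the infimum of any two elements) in which the order is dense and every element has incomparable elements above it. If σ is an automorphism of M with no fixed points, then there exists a branch (maximal downward-closed chain) B ⊆ M with σ(B) = B. -/
/-!
Among the `σ`-invariant downward-closed chains choose, by Zorn, a maximal one `C`. If some
`y ∉ C` were comparable to all of `C`, then `C` lies below `w = y ⊓ σ y`; since `w` and `σ w` both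
lie below `σ y` they are comparable, so the `σ`-orbit of `w` is a chain, and its downward closure
is an invariant downward-closed chain containing `C` and `w`. Maximality forces `w ∈ C`, and then
`σ w ≤ w ≤ σ w`, contradicting fixed-point freeness.
-/

section

variable {α : Type*} [PartialOrder α]

theorem IsChain.lowerClosure (htree : ∀ a : α, IsChain (· ≤ ·) (Set.Iic a)) {s : Set α}
    (hs : IsChain (· ≤ ·) s) : IsChain (· ≤ ·) (lowerClosure s : Set α) := by
  rintro x ⟨a, ha, hxa⟩ y ⟨b, hb, hyb⟩ hne
  rcases hs.total ha hb with hab | hba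
  · exact htree b (hxa.trans hab) hyb hne
  · exact htree a hxa (hyb.trans hba) hne

namespace OrderIso

def IsInvariantLowerChain (e : α ≃o α) (C : Set α) : Prop :=
  IsChain (· ≤ ·) C ∧ IsLowerSet C ∧ e '' C = C

theorem exists_maximal_isInvariantLowerChain (e : α ≃o α) :
    ∃ C, Maximal (IsInvariantLowerChain e) C := by
  refine zorn_subset _ fun c hc hchain =>
    ⟨⋃₀ c, ⟨?_, ?_, ?_⟩, fun s hs => Set.subset_sUnion_of_mem hs⟩
  · rintro x ⟨s, hs, hxs⟩ y ⟨t, ht, hyt⟩ hne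
    rcases hchain.total hs ht with hst | hts
    · exact (hc ht).1 (hst hxs) hyt hne
    · exact (hc hs).1 hxs (hts hyt) hne
  · exact isLowerSet_sUnion fun s hs => (hc hs).2.1
  · rw [Set.image_sUnion, Set.image_congr fun s hs => (hc hs).2.2, Set.image_id']

theorem isChain_range_zpow_apply (e : α ≃o α) {w : α} (hw : w ≤ e w ∨ e w ≤ w) :
    IsChain (· ≤ ·) (Set.range fun n : ℤ => (e ^ n) w) := by
  rcases hw with hle | hge
  · refine (monotone_int_of_le_succ fun n => ?_).isChain_range
    rw [zpow_add_one, RelIso.mul_apply]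
    exact (e ^ n).monotone hle
  · refine (antitone_int_of_succ_le fun n => ?_).isChain_range
    rw [zpow_add_one, RelIso.mul_apply]
    exact (e ^ n).monotone hge

theorem image_range_zpow_apply (e : α ≃o α) (w : α) :
    e '' Set.range (fun n : ℤ => (e ^ n) w) = Set.range fun n : ℤ => (e ^ n) w := by
  rw [← Set.range_comp, ← (add_left_surjective 1).range_comp fun n : ℤ => (e ^ n) w]
  congr 1
  funext n
  rw [Function.comp_apply, Function.comp_apply, zpow_one_add, RelIso.mul_apply]

theorem isInvariantLowerChain_lowerClosure_range_zpow_apply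
    (htree : ∀ a : α, IsChain (· ≤ ·) (Set.Iic a)) (e : α ≃o α) {w : α} (hw : w ≤ e w ∨ e w ≤ w) :
    IsInvariantLowerChain e (lowerClosure (Set.range fun n : ℤ => (e ^ n) w)) :=
  ⟨(e.isChain_range_zpow_apply hw).lowerClosure htree, (lowerClosure _).lower, by
    rw [← LowerSet.coe_map, ← lowerClosure_image, e.image_range_zpow_apply]⟩

end OrderIso

end

namespace OrderIso

theorem eq_of_maximal_isInvariantLowerChain {α : Type*} [SemilatticeInf α]
    (htree : ∀ a : α, IsChain (· ≤ ·) (Set.Iic a)) {e : α ≃o α} (hfix : ∀ x, e x ≠ x)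
    {C : Set α} (hC : Maximal (IsInvariantLowerChain e) C) {B : Set α} (hB : IsChain (· ≤ ·) B)
    (hCB : C ⊆ B) : B = C := by
  obtain ⟨-, hClower, hCinv⟩ := hC.1
  refine hCB.antisymm' fun y hyB => by_contra fun hyC => ?_
  have hCy : C ⊆ Set.Iic y := fun c hc =>
    (hB.total (hCB hc) hyB).resolve_right fun hyc => hyC (hClower hyc hc)
  have hCey : C ⊆ Set.Iic (e y) := by
    rw [← hCinv]
    rintro _ ⟨c, hc, rfl⟩
    exact e.monotone (hCy hc)
  set w := y ⊓ e y
  have hCw : C ⊆ Set.Iic w := fun c hc => le_inf (hCy hc) (hCey hc)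
  have hw : w ≤ e w ∨ e w ≤ w := (htree (e y)).total inf_le_right (e.monotone inf_le_left)
  have hwC : w ∈ C := by
    refine hC.2 (isInvariantLowerChain_lowerClosure_range_zpow_apply htree e hw) ?_ ?_
    · exact fun c hc => ⟨w, ⟨0, rfl⟩, hCw hc⟩
    · exact ⟨w, ⟨0, rfl⟩, le_rfl⟩
  have hew : e w ≤ w := hCw (hCinv ▸ Set.mem_image_of_mem e hwC)
  have hwe : w ≤ e w := by
    obtain ⟨x, hxC, hxw⟩ : w ∈ e '' C := hCinv.symm ▸ hwC
    calc w = e x := hxw.symm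
      _ ≤ e w := e.monotone (hCw hxC)
  exact hfix w (hew.antisymm hwe)

end OrderIso

theorem stmt_6_general {M : Type*} [SemilatticeInf M]
    (htree : ∀ a : M, IsChain (· ≤ ·) {x : M | x ≤ a})
    (σ : Equiv.Perm M) (hmono : ∀ a b : M, a ≤ b ↔ σ a ≤ σ b)
    (hfix : ∀ x : M, σ x ≠ x) :
    ∃ B : Set M, IsChain (· ≤ ·) B ∧ (∀ x ∈ B, ∀ y : M, y ≤ x → y ∈ B) ∧
      (∀ B' : Set M, IsChain (· ≤ ·) B' → B ⊆ B' → B' = B) ∧ σ '' B = B := by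
  let e : M ≃o M := ⟨σ, fun {a b} => (hmono a b).symm⟩
  obtain ⟨C, hC⟩ := e.exists_maximal_isInvariantLowerChain
  exact ⟨C, hC.1.1, fun x hx y hy => hC.1.2.1 hy hx,
    fun B hB hCB => e.eq_of_maximal_isInvariantLowerChain htree hfix hC hB hCB, hC.1.2.2⟩

/-- In a dense, everywhere-branching meet-tree, a fixed-point-free automorphism fixes
setwise some branch (maximal downward-closed chain). -/
theorem stmt_6 {M : Type*} [SemilatticeInf M]
    (htree : ∀ a : M, IsChain (· ≤ ·) {x : M | x ≤ a})
    (hdense : ∀ a b : M, a < b → ∃ c : M, a < c ∧ c < b)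
    (hbranch : ∀ a : M, ∃ b c : M, a < b ∧ a < c ∧ ¬ b ≤ c ∧ ¬ c ≤ b)
    (σ : Equiv.Perm M) (hmono : ∀ a b : M, a ≤ b ↔ σ a ≤ σ b)
    (hinf : ∀ a b : M, σ (a ⊓ b) = σ a ⊓ σ b)
    (hfix : ∀ x : M, σ x ≠ x) :
    ∃ B : Set M, IsChain (· ≤ ·) B ∧ (∀ x ∈ B, ∀ y : M, y ≤ x → y ∈ B) ∧
      (∀ B' : Set M, IsChain (· ≤ ·) B' → B ⊆ B' → B' = B) ∧ σ '' B = B :=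
  stmt_6_general htree σ hmono hfix
end

section
/- Let M be a meet-tree and σ an automorphism of M. If B ⊆ M is a σ-invariant chain that is downward closed and has no maximum, and a ∈ M satisfies a ≥ B (a is an upper bound of B) and σ(a) is comparable with a, then B ∪ {σ^n(a) : n ∈ ℤ} is a chain. -/
/-!
Since σ and σ⁻¹ preserve both the order and `B`, every point `σ ^ n a` of the orbit is again an
upper bound of `B`. Comparability of `a` and `σ a` is transported by the order automorphisms
`σ ^ n` to every pair of consecutive orbit points, so `n ↦ σ ^ n a` is monotone or antitone
on `ℤ` and the orbit is a chain lying above the chain `B`.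
-/

def OrderIso.toPermHom (α : Type*) [LE α] : (α ≃o α) →* Equiv.Perm α where
  toFun e := e.toEquiv
  map_one' := rfl
  map_mul' _ _ := rfl

namespace Equiv.Perm

variable {α : Type*} {σ : Perm α}

theorem zpow_le_zpow_iff_of_le_iff [LE α] (hσ : ∀ x y : α, x ≤ y ↔ σ x ≤ σ y) (n : ℤ)
    (x y : α) : (σ ^ n) x ≤ (σ ^ n) y ↔ x ≤ y := by
  let e : α ≃o α := ⟨σ, (hσ _ _).symm⟩
  have he : σ ^ n = (e ^ n).toEquiv := (map_zpow (OrderIso.toPermHom α) e n).symm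
  rw [he]
  exact (e ^ n).le_iff_le

open Pointwise in
theorem zpow_image_eq_of_image_eq {s : Set α} (h : σ '' s = s) (n : ℤ) : (σ ^ n) '' s = s :=
  zpow_mem (show σ ∈ MulAction.stabilizer (Perm α) s from h) n

theorem zpow_apply_mem_of_image_eq {s : Set α} (h : σ '' s = s) (n : ℤ) {x : α} (hx : x ∈ s) :
    (σ ^ n) x ∈ s :=
  zpow_image_eq_of_image_eq h n ▸ Set.mem_image_of_mem _ hx

variable [Preorder α]

theorem isChain_range_zpow_apply (hσ : ∀ x y : α, x ≤ y ↔ σ x ≤ σ y) {a : α}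
    (ha : σ a ≤ a ∨ a ≤ σ a) : IsChain (· ≤ ·) (Set.range fun n : ℤ => (σ ^ n) a) := by
  have hsucc (n : ℤ) : (σ ^ (n + 1)) a = (σ ^ n) (σ a) := by rw [zpow_add_one, mul_apply]
  rcases ha with ha | ha
  · refine Antitone.isChain_range (antitone_int_of_succ_le fun n => ?_)
    rw [hsucc]
    exact (zpow_le_zpow_iff_of_le_iff hσ n _ _).2 ha
  · refine Monotone.isChain_range (monotone_int_of_le_succ fun n => ?_)
    rw [hsucc]
    exact (zpow_le_zpow_iff_of_le_iff hσ n _ _).2 ha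

theorem le_zpow_apply_of_image_eq (hσ : ∀ x y : α, x ≤ y ↔ σ x ≤ σ y) {s : Set α}
    (hs : σ '' s = s) {a : α} (ha : ∀ b ∈ s, b ≤ a) (n : ℤ) {b : α} (hb : b ∈ s) :
    b ≤ (σ ^ n) a :=
  calc b = (σ ^ n) ((σ ^ (-n)) b) := by
        rw [← mul_apply, ← zpow_add, add_neg_cancel, zpow_zero, one_apply]
    _ ≤ (σ ^ n) a :=
        (zpow_le_zpow_iff_of_le_iff hσ n _ _).2 (ha _ (zpow_apply_mem_of_image_eq hs (-n) hb))

end Equiv.Perm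

theorem stmt_8_general {M : Type*} [SemilatticeInf M]
    (σ : Equiv.Perm M) (hmono : ∀ a b : M, a ≤ b ↔ σ a ≤ σ b)
    (B : Set M) (hB : IsChain (· ≤ ·) B) (hBinv : σ '' B = B)
    (a : M) (ha : ∀ b ∈ B, b ≤ a) (hcomp : σ a ≤ a ∨ a ≤ σ a) :
    IsChain (· ≤ ·) (B ∪ {z : M | ∃ n : ℤ, (σ ^ n) a = z}) :=
  isChain_union.2 ⟨hB, Equiv.Perm.isChain_range_zpow_apply hmono hcomp, fun _ hb _ ⟨n, hn⟩ _ =>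
    Or.inl (hn ▸ Equiv.Perm.le_zpow_apply_of_image_eq hmono hBinv ha n hb)⟩

/-- In a meet-tree, if `B` is a σ-invariant downward-closed chain with no maximum and `a`
is an upper bound of `B` comparable with `σ a`, then `B` together with the σ-orbit of
`a` is a chain. -/
theorem stmt_8 {M : Type*} [SemilatticeInf M]
    (htree : ∀ a : M, IsChain (· ≤ ·) {x : M | x ≤ a})
    (σ : Equiv.Perm M) (hmono : ∀ a b : M, a ≤ b ↔ σ a ≤ σ b)
    (hinf : ∀ a b : M, σ (a ⊓ b) = σ a ⊓ σ b)
    (B : Set M) (hB : IsChain (· ≤ ·) B) (hBinv : σ '' B = B)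
    (hdc : ∀ x ∈ B, ∀ y : M, y ≤ x → y ∈ B)
    (hnomax : ∀ x ∈ B, ∃ y ∈ B, x < y)
    (a : M) (ha : ∀ b ∈ B, b ≤ a) (hcomp : σ a ≤ a ∨ a ≤ σ a) :
    IsChain (· ≤ ·) (B ∪ {z : M | ∃ n : ℤ, (σ ^ n) a = z}) :=
  stmt_8_general σ hmono B hB hBinv a ha hcomp
end

section
/- On the atomless countable Boolean algebra, define for finite subsets A, B (over the empty base): A ⫫ B iff the subalgebra generated by A ∪ B has atoms in natural bijection with pairs (atom of ⟨A⟩, atom of ⟨B⟩), i.e., every atom a of ⟨A⟩ and atom b of ⟨B⟩ satisfy a ∧ b ≠ 0 and ⟨A⟩ ∩ ⟨B⟩ = {0, 1}. Then if A ⫫ B, A' ⫫ B', and there are isomorphisms f : ⟨A⟩ → ⟨A'⟩, g : ⟨B⟩ → ⟨B'⟩, the map sending each atom a ∧ b of ⟨A ∪ B⟩ (for atoms a ∈ ⟨A⟩, b ∈ ⟨B⟩) to f(a) ∧ g(b) extends to an isomorphism ⟨A ∪ B⟩ → ⟨A' ∪ B'⟩. -/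
/-- `S` is (the underlying set of) a Boolean subalgebra. -/
def IsBoolSub {α : Type*} [BooleanAlgebra α] (S : Set α) : Prop :=
  ⊥ ∈ S ∧ ⊤ ∈ S ∧ (∀ x ∈ S, ∀ y ∈ S, x ⊓ y ∈ S) ∧ (∀ x ∈ S, ∀ y ∈ S, x ⊔ y ∈ S) ∧
    ∀ x ∈ S, xᶜ ∈ S

/-- `a` is an atom of the subalgebra `S`: a minimal nonzero element of `S`. -/
def atomOfSub {α : Type*} [BooleanAlgebra α] (S : Set α) (a : α) : Prop :=
  a ∈ S ∧ a ≠ ⊥ ∧ ∀ x ∈ S, x ≤ a → x = ⊥ ∨ x = a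

/-- `S` is the subalgebra generated by `A ∪ B`. -/
def genBy {α : Type*} [BooleanAlgebra α] (S A B : Set α) : Prop :=
  IsBoolSub S ∧ A ∪ B ⊆ S ∧ ∀ T : Set α, IsBoolSub T → A ∪ B ⊆ T → S ⊆ T

/-! Independence makes the meets `a ⊓ b` of an atom `a` of `A` with an atom `b` of `B` nonzero
and pairwise disjoint, and they join to `⊤`. Hence `T ↦ ⨆ (a, b) ∈ T, a ⊓ b` is an order embedding
of the finsets of atom pairs into `α`, whose image is closed under joins and complements and
contains `A ∪ B`: it is the generated subalgebra. The isomorphisms `f` and `g` biject the atoms,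
hence the atom pairs, and transporting along these identifications gives the isomorphism. -/

section

open Finset Function

variable {α : Type*} [BooleanAlgebra α]

namespace IsBoolSub

variable {A : Set α}

theorem of_sup_compl (htop : ⊤ ∈ A) (hsup : ∀ x ∈ A, ∀ y ∈ A, x ⊔ y ∈ A)
    (hcompl : ∀ x ∈ A, xᶜ ∈ A) : IsBoolSub A := by
  refine ⟨by simpa using hcompl ⊤ htop, htop, fun x hx y hy => ?_, hsup, hcompl⟩
  simpa using hcompl _ (hsup _ (hcompl x hx) _ (hcompl y hy))

theorem finset_sup_mem (hA : IsBoolSub A) {ι : Type*} {s : Finset ι} {e : ι → α}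
    (h : ∀ i ∈ s, e i ∈ A) : s.sup e ∈ A :=
  Finset.sup_induction hA.1 hA.2.2.2.1 h

end IsBoolSub

theorem genBy.unique {S R A B : Set α} (hS : genBy S A B) (hR : genBy R A B) : S = R :=
  (hS.2.2 R hR.1 hR.2.1).antisymm (hR.2.2 S hS.1 hS.2.1)

abbrev SubAtoms (A : Set α) : Type _ := {x : A // atomOfSub A x}

section Atoms

variable {A A' : Set α}

theorem atomOfSub.disjoint (hA : IsBoolSub A) {a b : α} (ha : atomOfSub A a)
    (hb : atomOfSub A b) (hab : a ≠ b) : Disjoint a b := by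
  have hmem : a ⊓ b ∈ A := hA.2.2.1 a ha.1 b hb.1
  refine disjoint_iff.2 <| (ha.2.2 _ hmem inf_le_left).resolve_right fun h => hab ?_
  exact h.symm.trans <| (hb.2.2 _ hmem inf_le_right).resolve_left (by rw [h]; exact ha.2.1)

theorem exists_atomOfSub_le (hAfin : A.Finite) {x : α} (hx : x ∈ A) (hx0 : x ≠ ⊥) :
    ∃ a, atomOfSub A a ∧ a ≤ x := by
  obtain ⟨a, ⟨haA, hax, ha0⟩, hmin⟩ :=
    (hAfin.subset fun z (hz : z ∈ A ∧ z ≤ x ∧ z ≠ ⊥) => hz.1).exists_minimalFor id _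
      ⟨x, hx, le_rfl, hx0⟩
  refine ⟨a, ⟨haA, ha0, fun z hz hza => or_iff_not_imp_left.2 fun hz0 => ?_⟩, hax⟩
  exact hza.antisymm (hmin ⟨hz, hza.trans hax, hz0⟩ hza)

open scoped Classical in
theorem sup_subAtoms_le_eq [Fintype (SubAtoms A)] (hA : IsBoolSub A) (hAfin : A.Finite)
    {x : α} (hx : x ∈ A) :
    ({a : SubAtoms A | (a : α) ≤ x} : Finset _).sup (fun a => (a : α)) = x := by
  set y := ({a : SubAtoms A | (a : α) ≤ x} : Finset _).sup (fun a => (a : α))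
  have hyx : y ≤ x := Finset.sup_le fun a ha => (Finset.mem_filter.1 ha).2
  refine hyx.antisymm (by_contra fun hxy => ?_)
  have hyA : y ∈ A := hA.finset_sup_mem fun a _ => a.1.2
  obtain ⟨a, ha, hale⟩ := exists_atomOfSub_le hAfin (hA.2.2.1 x hx _ (hA.2.2.2.2 y hyA))
    (by rwa [← sdiff_eq, ne_eq, sdiff_eq_bot_iff])
  have hay : a ≤ y :=
    Finset.le_sup (f := fun a : SubAtoms A => (a : α)) (b := ⟨⟨a, ha.1⟩, ha⟩)
      (Finset.mem_filter.2 ⟨Finset.mem_univ _, hale.trans inf_le_left⟩)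
  exact ha.2.1 (le_bot_iff.1 (by simpa using le_inf hay (hale.trans inf_le_right)))

theorem sup_subAtoms_eq_top [Fintype (SubAtoms A)] (hA : IsBoolSub A) (hAfin : A.Finite) :
    Finset.univ.sup (fun a : SubAtoms A => (a : α)) = ⊤ := by
  simpa using sup_subAtoms_le_eq hA hAfin hA.2.1

theorem atomOfSub.map_orderIso (hA : IsBoolSub A) (hA' : IsBoolSub A') (f : A ≃o A')
    {x : A} (hx : atomOfSub A x) : atomOfSub A' (f x) := by
  have hbot : f ⟨⊥, hA.1⟩ = ⟨⊥, hA'.1⟩ :=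
    f.map_bot' (fun y => (bot_le : ⊥ ≤ (y : α))) (fun y => (bot_le : ⊥ ≤ (y : α)))
  refine ⟨(f x).2, fun h0 => hx.2.1 ?_, fun y hy hyx => ?_⟩
  · exact congrArg Subtype.val (f.injective ((Subtype.ext h0).trans hbot.symm))
  · obtain ⟨z, hz⟩ := f.surjective ⟨y, hy⟩
    have hzx : z ≤ x := f.le_iff_le.1 (by rw [hz]; exact hyx)
    rcases hx.2.2 z z.2 hzx with h | h
    · rw [show z = ⟨⊥, hA.1⟩ from Subtype.ext h, hbot] at hz
      exact Or.inl (congrArg Subtype.val hz.symm)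
    · rw [Subtype.ext h] at hz
      exact Or.inr (congrArg Subtype.val hz.symm)

def subAtomsCongr (hA : IsBoolSub A) (hA' : IsBoolSub A') (f : A ≃o A') :
    SubAtoms A ≃ SubAtoms A' :=
  f.toEquiv.subtypeEquiv fun x =>
    ⟨atomOfSub.map_orderIso hA hA' f, fun h => by
      simpa using atomOfSub.map_orderIso hA' hA f.symm h⟩

end Atoms

section PairwiseDisjoint

variable {ι : Type*} {e : ι → α}

theorem Finset.sup_le_sup_iff_of_pairwise_disjoint (hne : ∀ i, e i ≠ ⊥)
    (hd : Pairwise (Disjoint on e)) {s t : Finset ι} : s.sup e ≤ t.sup e ↔ s ⊆ t := by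
  refine ⟨fun h i hi => by_contra fun hit => hne i ?_, fun h => Finset.sup_mono h⟩
  have hdis : Disjoint (e i) (t.sup e) :=
    Finset.disjoint_sup_right.2 fun j hj => hd fun hij => hit (hij ▸ hj)
  exact hdis.eq_bot_of_le ((Finset.le_sup hi).trans h)

def Finset.supOrderEmbedding (hne : ∀ i, e i ≠ ⊥) (hd : Pairwise (Disjoint on e)) :
    Finset ι ↪o α :=
  OrderEmbedding.ofMapLEIff (fun s => s.sup e) fun _ _ =>
    Finset.sup_le_sup_iff_of_pairwise_disjoint hne hd

theorem Finset.compl_sup_of_pairwise_disjoint [Fintype ι] [DecidableEq ι]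
    (htop : Finset.univ.sup e = ⊤) (hd : Pairwise (Disjoint on e)) (s : Finset ι) :
    (s.sup e)ᶜ = sᶜ.sup e := by
  refine IsCompl.compl_eq ⟨?_, ?_⟩
  · exact Finset.disjoint_sup_left.2 fun i hi => Finset.disjoint_sup_right.2 fun j hj =>
      hd fun hij => Finset.mem_compl.1 hj (hij ▸ hi)
  · rw [codisjoint_iff, ← Finset.sup_union, Finset.union_compl, htop]

end PairwiseDisjoint

def OrderIso.finsetCongr {ι κ : Type*} (e : ι ≃ κ) : Finset ι ≃o Finset κ where
  toEquiv := e.finsetCongr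
  map_rel_iff' := map_subset_map

section Independent

variable {A B S : Set α}

def atomMeet (p : SubAtoms A × SubAtoms B) : α := (p.1 : α) ⊓ p.2

theorem atomMeet_ne_bot (hind : ∀ a b : α, atomOfSub A a → atomOfSub B b → a ⊓ b ≠ ⊥)
    (p : SubAtoms A × SubAtoms B) : atomMeet p ≠ ⊥ :=
  hind _ _ p.1.2 p.2.2

theorem pairwise_disjoint_atomMeet (hA : IsBoolSub A) (hB : IsBoolSub B) :
    Pairwise (Disjoint on (atomMeet : SubAtoms A × SubAtoms B → α)) := by
  rintro ⟨a, b⟩ ⟨a', b'⟩ hne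
  by_cases ha : (a : α) = a'
  · have hb : (b : α) ≠ b' := fun hb => hne (by ext <;> assumption)
    exact (atomOfSub.disjoint hB b.2 b'.2 hb).mono inf_le_right inf_le_right
  · exact (atomOfSub.disjoint hA a.2 a'.2 ha).mono inf_le_left inf_le_left

theorem sup_product_atomMeet (s : Finset (SubAtoms A)) (t : Finset (SubAtoms B)) :
    (s ×ˢ t).sup atomMeet = s.sup (fun a => (a : α)) ⊓ t.sup (fun b => (b : α)) :=
  (sup_inf_sup s t (fun a => (a : α)) (fun b => (b : α))).symm

theorem sup_univ_atomMeet [Fintype (SubAtoms A)] [Fintype (SubAtoms B)]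
    (hA : IsBoolSub A) (hB : IsBoolSub B) (hAfin : A.Finite) (hBfin : B.Finite) :
    univ.sup (atomMeet : SubAtoms A × SubAtoms B → α) = ⊤ := by
  rw [← univ_product_univ, sup_product_atomMeet, sup_subAtoms_eq_top hA hAfin,
    sup_subAtoms_eq_top hB hBfin, inf_top_eq]

theorem genBy.eq_range_sup_atomMeet (hA : IsBoolSub A) (hB : IsBoolSub B)
    (hAfin : A.Finite) (hBfin : B.Finite) (hS : genBy S A B) :
    S = Set.range fun s : Finset (SubAtoms A × SubAtoms B) => s.sup atomMeet := by
  classical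
  have := hAfin.to_subtype
  have := hBfin.to_subtype
  have := Fintype.ofFinite (SubAtoms A)
  have := Fintype.ofFinite (SubAtoms B)
  have htop := sup_univ_atomMeet hA hB hAfin hBfin
  refine hS.unique ⟨IsBoolSub.of_sup_compl ⟨univ, htop⟩ ?_ ?_, ?_, ?_⟩
  · rintro _ ⟨s, rfl⟩ _ ⟨t, rfl⟩
    exact ⟨s ∪ t, sup_union⟩
  · rintro _ ⟨s, rfl⟩
    exact ⟨sᶜ, (compl_sup_of_pairwise_disjoint htop (pairwise_disjoint_atomMeet hA hB) s).symm⟩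
  · rintro x (hx | hx)
    · refine ⟨({a : SubAtoms A | (a : α) ≤ x} : Finset _) ×ˢ univ, ?_⟩
      dsimp only
      rw [sup_product_atomMeet, sup_subAtoms_le_eq hA hAfin hx, sup_subAtoms_eq_top hB hBfin,
        inf_top_eq]
    · refine ⟨univ ×ˢ ({b : SubAtoms B | (b : α) ≤ x} : Finset _), ?_⟩
      dsimp only
      rw [sup_product_atomMeet, sup_subAtoms_le_eq hB hBfin hx, sup_subAtoms_eq_top hA hAfin,
        top_inf_eq]
  · rintro T hT hABT _ ⟨s, rfl⟩
    exact hT.finset_sup_mem fun p _ =>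
      hT.2.2.1 _ (hABT (Or.inl p.1.1.2)) _ (hABT (Or.inr p.2.1.2))

theorem genBy.exists_orderIso_finset (hA : IsBoolSub A) (hB : IsBoolSub B)
    (hAfin : A.Finite) (hBfin : B.Finite)
    (hind : ∀ a b : α, atomOfSub A a → atomOfSub B b → a ⊓ b ≠ ⊥) (hS : genBy S A B) :
    ∃ φ : Finset (SubAtoms A × SubAtoms B) ≃o S, ∀ s, (φ s : α) = s.sup atomMeet :=
  ⟨(supOrderEmbedding (atomMeet_ne_bot hind) (pairwise_disjoint_atomMeet hA hB)).orderIso.trans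
      (OrderIso.setCongr _ _ (hS.eq_range_sup_atomMeet hA hB hAfin hBfin).symm), fun _ => rfl⟩

end Independent

end

theorem stmt_10_general {α : Type*} [BooleanAlgebra α]
    (A B A' B' : Set α)
    (hA : IsBoolSub A) (hB : IsBoolSub B) (hA' : IsBoolSub A') (hB' : IsBoolSub B')
    (hAfin : A.Finite) (hBfin : B.Finite) (hA'fin : A'.Finite) (hB'fin : B'.Finite)
    (hind : ∀ a b : α, atomOfSub A a → atomOfSub B b → a ⊓ b ≠ ⊥)
    (hind' : ∀ a b : α, atomOfSub A' a → atomOfSub B' b → a ⊓ b ≠ ⊥)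
    (S S' : Set α) (hS : genBy S A B) (hS' : genBy S' A' B')
    (f : A ≃o A') (g : B ≃o B') :
    ∃ h : S ≃o S',
      ∀ (a b : α) (ha : atomOfSub A a) (hb : atomOfSub B b) (x : S),
        (x : α) = a ⊓ b → (h x : α) = (f ⟨a, ha.1⟩ : α) ⊓ (g ⟨b, hb.1⟩ : α) := by
  obtain ⟨φ, hφ⟩ := hS.exists_orderIso_finset hA hB hAfin hBfin hind
  obtain ⟨φ', hφ'⟩ := hS'.exists_orderIso_finset hA' hB' hA'fin hB'fin hind'
  let e := (subAtomsCongr hA hA' f).prodCongr (subAtomsCongr hB hB' g)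
  refine ⟨φ.symm.trans ((OrderIso.finsetCongr e).trans φ'), fun a b ha hb x hx => ?_⟩
  have hφx : φ.symm x = {(⟨⟨a, ha.1⟩, ha⟩, ⟨⟨b, hb.1⟩, hb⟩)} :=
    φ.symm_apply_eq.2 (Subtype.ext (by rw [hφ, Finset.sup_singleton, hx]; rfl))
  simp [hφx, hφ', e, atomMeet, subAtomsCongr, OrderIso.finsetCongr]

/-- Stationarity for the independence relation on the atomless Boolean algebra:
if `A ⫫ B`, `A' ⫫ B'`, and `f, g` are isomorphisms `⟨A⟩ → ⟨A'⟩`, `⟨B⟩ → ⟨B'⟩`,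
then the map sending an atom `a ⊓ b` of `⟨A ∪ B⟩` to `f a ⊓ g b` extends to an
isomorphism `⟨A ∪ B⟩ → ⟨A' ∪ B'⟩`.  Here the subalgebras generated by finite sets
are represented as finite subalgebra-sets, and isomorphisms as order isomorphisms. -/
theorem stmt_10 {α : Type*} [BooleanAlgebra α]
    (hatomless : ∀ a : α, ¬ IsAtom a)
    (A B A' B' : Set α)
    (hA : IsBoolSub A) (hB : IsBoolSub B) (hA' : IsBoolSub A') (hB' : IsBoolSub B')
    (hAfin : A.Finite) (hBfin : B.Finite) (hA'fin : A'.Finite) (hB'fin : B'.Finite)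
    (hABtriv : ∀ x : α, x ∈ A → x ∈ B → x = ⊥ ∨ x = ⊤)
    (hA'B'triv : ∀ x : α, x ∈ A' → x ∈ B' → x = ⊥ ∨ x = ⊤)
    (hind : ∀ a b : α, atomOfSub A a → atomOfSub B b → a ⊓ b ≠ ⊥)
    (hind' : ∀ a b : α, atomOfSub A' a → atomOfSub B' b → a ⊓ b ≠ ⊥)
    (S S' : Set α) (hS : genBy S A B) (hS' : genBy S' A' B')
    (f : A ≃o A') (g : B ≃o B') :
    ∃ h : S ≃o S',
      ∀ (a b : α) (ha : atomOfSub A a) (hb : atomOfSub B b) (x : S),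
        (x : α) = a ⊓ b → (h x : α) = (f ⟨a, ha.1⟩ : α) ⊓ (g ⟨b, hb.1⟩ : α) :=
  stmt_10_general A B A' B' hA hB hA' hB' hAfin hBfin hA'fin hB'fin hind hind' S S' hS hS' f g
end

section
/- Let G be a group that cannot be covered by finitely many cosets of proper subgroups without one of the subgroups having finite index (Neumann's lemma): if G = ⋃_{i<n} g_i H_i where each H_i is a subgroup, then some H_i has finite index in G. Consequently, if H_0, …, H_{n-1} are subgroups of G each of infinite index, then G ≠ ⋃_{i<n} H_i, i.e., there exists g ∈ G lying in none of the H_i. -/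
open Pointwise

/-- Neumann's lemma: if a group is not coverable by finitely many cosets of subgroups
without one of them having finite index, then finitely many subgroups of infinite index
never cover the group. -/
theorem stmt_11 {G : Type*} [Group G]
    (neumann : ∀ (m : ℕ) (g : Fin m → G) (K : Fin m → Subgroup G),
      (⋃ i, (g i) • (K i : Set G)) = Set.univ → ∃ i, (K i).FiniteIndex)
    (n : ℕ) (H : Fin n → Subgroup G) (hinf : ∀ i, ¬ (H i).FiniteIndex) :
    ∃ g : G, ∀ i, g ∉ H i := by
  by_contra! hcover
  obtain ⟨i, hi⟩ := neumann n 1 H (Set.eq_univ_of_forall fun x => by simpa using hcover x)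
  exact hinf i hi
end

section
/- In the random partial order (Fraïssé limit of finite posets), define for finite sets A, B, C: A ⫫_C B iff A ∩ B ⊆ C and for all a ∈ A, b ∈ B, a and b are comparable iff there exists c ∈ C with a ≤ c ≤ b or b ≤ c ≤ a. Then ⫫ satisfies transitivity: if A ⫫_{C ∪ D} B and D ⫫_C B, then A ∪ D ⫫_C B. -/
/-! If `a ≤ c ≤ b` with `c ∈ D`, then `D ⫫_C B` yields some `d ∈ C` between `c` and `b`; it
cannot lie on the wrong side of `c` unless it equals `c` (antisymmetry), so `d` is also between
`a` and `b`. -/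

/-- The independence relation on finite subsets of a poset. -/
def posetInd {P : Type*} [PartialOrder P] [DecidableEq P] (A C B : Finset P) : Prop :=
  A ∩ B ⊆ C ∧ ∀ a ∈ A, ∀ b ∈ B,
    ((a ≤ b ∨ b ≤ a) ↔ ∃ c ∈ C, (a ≤ c ∧ c ≤ b) ∨ (b ≤ c ∧ c ≤ a))

section Between

variable {P : Type*} [PartialOrder P]

def Between (a c b : P) : Prop := (a ≤ c ∧ c ≤ b) ∨ (b ≤ c ∧ c ≤ a)

theorem Between.le_or_le_right {a c b : P} : Between a c b → c ≤ b ∨ b ≤ c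
  | .inl ⟨_, hcb⟩ => .inl hcb
  | .inr ⟨hbc, _⟩ => .inr hbc

theorem Between.trans_left {a c d b : P} (hc : Between a c b) (hd : Between c d b) :
    Between a d b := by
  rcases hc with ⟨hac, hcb⟩ | ⟨hbc, hca⟩ <;> rcases hd with ⟨hcd, hdb⟩ | ⟨hbd, hdc⟩
  · exact .inl ⟨hac.trans hcd, hdb⟩
  · exact .inl ⟨hac.trans (le_antisymm hdc (hcb.trans hbd)).ge, hdc.trans hcb⟩
  · exact .inr ⟨hbc.trans (le_antisymm (hdb.trans hbc) hcd).ge, (hdb.trans hbc).trans hca⟩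
  · exact .inr ⟨hbd, hdc.trans hca⟩

end Between

theorem Finset.inter_subset_of_union {α : Type*} [DecidableEq α] {A B C D : Finset α}
    (hA : A ∩ B ⊆ C ∪ D) (hD : D ∩ B ⊆ C) : (A ∪ D) ∩ B ⊆ C := by
  rw [Finset.union_inter_distrib_right, Finset.union_subset_iff]
  refine ⟨fun x hx => ?_, hD⟩
  rcases Finset.mem_union.mp (hA hx) with hC | hxD
  · exact hC
  · exact hD (Finset.mem_inter.mpr ⟨hxD, (Finset.mem_inter.mp hx).2⟩)

/-- Transitivity of the independence relation in a partial order. -/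
theorem stmt_15 {P : Type*} [PartialOrder P] [DecidableEq P]
    (A B C D : Finset P) (h1 : posetInd A (C ∪ D) B) (h2 : posetInd D C B) :
    posetInd (A ∪ D) C B := by
  refine ⟨Finset.inter_subset_of_union h1.1 h2.1, fun a ha b hb => ?_⟩
  rcases Finset.mem_union.mp ha with haA | haD
  · refine ⟨fun hab => ?_, fun ⟨c, hc, hacb⟩ =>
      (h1.2 a haA b hb).mpr ⟨c, Finset.mem_union_left D hc, hacb⟩⟩
    obtain ⟨c, hc, hacb : Between a c b⟩ := (h1.2 a haA b hb).mp hab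
    rcases Finset.mem_union.mp hc with hcC | hcD
    · exact ⟨c, hcC, hacb⟩
    · obtain ⟨d, hdC, hcdb : Between c d b⟩ := (h2.2 c hcD b hb).mp hacb.le_or_le_right
      exact ⟨d, hdC, hacb.trans_left hcdb⟩
  · exact h2.2 a haD b hb
end

section
/- Let M be a countable structure and G = Aut(M) with the pointwise convergence topology (a Polish group). If G contains a repulsive automorphism σ, then G has a cyclically dense conjugacy class: there exists τ ∈ G such that {σ^n τ σ^{-n} : n ∈ ℤ} is dense in G; in particular G is topologically 2-generated. -/
/-!
`τ` is a generic point, in the sense of the Rasiowa–Sikorski lemma (the forcing form of the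
Baire category argument), of the poset of finite partial maps that extend to an automorphism,
i.e. of the nonempty basic open sets of `Aut(M)`. Besides the cofinal sets putting a given point
into the domain or the range, for each pair `a, b` in the same orbit the conditions sending
`σⁿ a` to `σⁿ b` for some `n` are cofinal: given a condition `c ↦ d`, pick `n` by repulsiveness
for the tuple `cdab`. Non-splitting of `tp(cdab / σⁿ(cdab))` gives `tp(c, σⁿa) = tp(c, σⁿb)`,
non-splitting of `tp(σⁿ(cdab) / cdab)` gives `tp(σⁿb, c) = tp(σⁿb, d)`, and homogeneity extends
`c σⁿa ↦ d σⁿb` to an automorphism. Then `σ⁻ⁿ τ σⁿ` maps `a` to `b`.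
-/

open FirstOrder

/-- Two tuples have the same (complete first-order) type over the empty set. -/
def sameTypeL (L : Language) {M : Type*} [L.Structure M] {α : Type} (x y : α → M) : Prop :=
  ∀ φ : L.Formula α, φ.Realize x ↔ φ.Realize y

/-- `tp(a/b)` does not split over `∅`. -/
def nonSplitL (L : Language) {M : Type*} [L.Structure M] {k l : ℕ}
    (a : Fin k → M) (b : Fin l → M) : Prop :=
  ∀ (m : ℕ) (u v : Fin m → Fin l), sameTypeL L (b ∘ u) (b ∘ v) →
    sameTypeL L (Sum.elim a (b ∘ u)) (Sum.elim a (b ∘ v))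

open Function Language Structure

section SameType

variable {L : Language} {M : Type*} [L.Structure M]

theorem sameTypeL.symm {α : Type} {x y : α → M} (h : sameTypeL L x y) : sameTypeL L y x :=
  fun φ => (h φ).symm

theorem sameTypeL.trans {α : Type} {x y z : α → M} (h : sameTypeL L x y)
    (h' : sameTypeL L y z) : sameTypeL L x z :=
  fun φ => (h φ).trans (h' φ)

theorem sameTypeL.comp {α β : Type} {x y : α → M} (h : sameTypeL L x y) (u : β → α) :
    sameTypeL L (x ∘ u) (y ∘ u) := fun φ => by
  simpa only [Formula.realize_relabel] using h (φ.relabel u)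

theorem sameTypeL_of_aut {α : Type} {x y : α → M} (ρ : M ≃[L] M)
    (h : ∀ i, ρ (x i) = y i) : sameTypeL L x y := fun φ => by
  rw [← funext h]
  exact (StrongHomClass.realize_formula ρ φ).symm

theorem sameTypeL_iterate {α : Type} (σ : M ≃[L] M) {x y : α → M} (h : sameTypeL L x y)
    (n : ℕ) : sameTypeL L ((⇑σ)^[n] ∘ x) ((⇑σ)^[n] ∘ y) := by
  induction n with
  | zero => exact h
  | succ n ih =>
    simp only [iterate_succ', comp_assoc]
    have hσ {z : α → M} : sameTypeL L z (σ ∘ z) := sameTypeL_of_aut σ fun _ => rfl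
    exact (hσ.symm.trans ih).trans hσ

theorem nonSplitL.sameTypeL_sumElim {k l m : ℕ} {x : Fin k → M} {y : Fin l → M}
    (h : nonSplitL L x y) {β : Type} (w : β → Fin k) {u v : Fin m → Fin l}
    (huv : sameTypeL L (y ∘ u) (y ∘ v)) :
    sameTypeL L (Sum.elim (x ∘ w) (y ∘ u)) (Sum.elim (x ∘ w) (y ∘ v)) := by
  simpa only [Sum.elim_comp_map, comp_id] using (h m u v huv).comp (Sum.map w id)

end SameType

section Homogeneous

variable {L : Language} {M : Type*} [L.Structure M]
  (hhom : ∀ (k : ℕ) (x y : Fin k → M), sameTypeL L x y → ∃ τ : M ≃[L] M, ∀ i, τ (x i) = y i)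
include hhom

theorem exists_aut_of_sameTypeL {α : Type} [Finite α] {x y : α → M} (h : sameTypeL L x y) :
    ∃ ρ : M ≃[L] M, ∀ i, ρ (x i) = y i := by
  obtain ⟨k, ⟨e⟩⟩ := Finite.exists_equiv_fin α
  obtain ⟨ρ, hρ⟩ := hhom k (x ∘ e.symm) (y ∘ e.symm) (h.comp e.symm)
  exact ⟨ρ, fun i => by simpa using hρ (e i)⟩

theorem exists_aut_extending_iterate (σ : M ≃[L] M)
    (hrep : ∀ (k : ℕ) (c : Fin k → M), ∃ n : ℕ,
      nonSplitL L c ((⇑σ)^[n] ∘ c) ∧ nonSplitL L ((⇑σ)^[n] ∘ c) c)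
    {K k : ℕ} {c d : Fin K → M} {a b : Fin k → M} (hcd : sameTypeL L c d)
    (hab : sameTypeL L a b) :
    ∃ n : ℕ, ∃ ρ : M ≃[L] M,
      (∀ i, ρ (c i) = d i) ∧ ∀ i, ρ ((⇑σ)^[n] (a i)) = (⇑σ)^[n] (b i) := by
  set e := Fin.append (Fin.append c d) (Fin.append a b)
  obtain ⟨n, hsplit, hsplit'⟩ := hrep _ e
  set s := (⇑σ)^[n]
  let jc : Fin K → Fin (K + K + (k + k)) := fun i => Fin.castAdd _ (Fin.castAdd _ i)
  let jd : Fin K → Fin (K + K + (k + k)) := fun i => Fin.castAdd _ (Fin.natAdd _ i)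
  let ja : Fin k → Fin (K + K + (k + k)) := fun i => Fin.natAdd _ (Fin.castAdd _ i)
  let jb : Fin k → Fin (K + K + (k + k)) := fun i => Fin.natAdd _ (Fin.natAdd _ i)
  have hc : e ∘ jc = c := by funext; simp only [e, jc, comp_apply, Fin.append_left]
  have hd : e ∘ jd = d := by
    funext; simp only [e, jd, comp_apply, Fin.append_left, Fin.append_right]
  have ha : e ∘ ja = a := by
    funext; simp only [e, ja, comp_apply, Fin.append_left, Fin.append_right]
  have hb : e ∘ jb = b := by funext; simp only [e, jb, comp_apply, Fin.append_right]
  have h₁ : sameTypeL L (Sum.elim c (s ∘ a)) (Sum.elim c (s ∘ b)) := by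
    have := hsplit.sameTypeL_sumElim jc (u := ja) (v := jb)
      (by rw [comp_assoc, comp_assoc, ha, hb]; exact sameTypeL_iterate σ hab n)
    rwa [comp_assoc, comp_assoc, hc, ha, hb] at this
  have h₂ : sameTypeL L (Sum.elim (s ∘ b) c) (Sum.elim (s ∘ b) d) := by
    have := hsplit'.sameTypeL_sumElim jb (u := jc) (v := jd) (by rwa [hc, hd])
    rwa [comp_assoc, hb, hc, hd] at this
  obtain ⟨ρ, hρ⟩ := exists_aut_of_sameTypeL hhom (h₁.trans (by simpa using h₂.comp Sum.swap))
  exact ⟨n, ρ, fun i => hρ (Sum.inl i), fun i => hρ (Sum.inr i)⟩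

end Homogeneous

section LocallyAut

variable {L : Language} {M : Type*} [L.Structure M]

theorem exists_aut_eq_of_locally_aut {f : M → M}
    (hloc : ∀ X : Set M, X.Finite → ∃ ρ : M ≃[L] M, ∀ x ∈ X, ρ x = f x)
    (hsurj : Surjective f) : ∃ τ : M ≃[L] M, ⇑τ = f := by
  have hinj : Injective f := fun x x' hxx' => by
    obtain ⟨ρ, hρ⟩ := hloc {x, x'} (Set.toFinite _)
    exact ρ.injective (by rw [hρ x (by simp), hρ x' (by simp), hxx'])
  refine ⟨⟨Equiv.ofBijective f ⟨hinj, hsurj⟩, fun F x => ?_, fun r x => ?_⟩, rfl⟩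
  · obtain ⟨ρ, hρ⟩ := hloc (insert (funMap F x) (Set.range x)) ((Set.finite_range x).insert _)
    change f (funMap F x) = funMap F (f ∘ x)
    rw [← hρ _ (Set.mem_insert _ _), ρ.map_fun]
    exact congrArg _ (funext fun i => hρ _ (Set.mem_insert_of_mem _ ⟨i, rfl⟩))
  · obtain ⟨ρ, hρ⟩ := hloc (Set.range x) (Set.finite_range x)
    change RelMap r (f ∘ x) ↔ RelMap r x
    rw [← ρ.map_rel r x]
    exact iff_of_eq (congrArg _ (funext fun i => (hρ _ ⟨i, rfl⟩).symm))

theorem exists_aut_of_locally_aut_rel {G : Set (M × M)}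
    (hloc : ∀ s ⊆ G, s.Finite → ∃ ρ : M ≃[L] M, ∀ p ∈ s, ρ p.1 = p.2)
    (hdom : ∀ x, ∃ y, (x, y) ∈ G) (hran : ∀ y, ∃ x, (x, y) ∈ G) :
    ∃ τ : M ≃[L] M, ∀ p ∈ G, τ p.1 = p.2 := by
  choose f hf using hdom
  have hfG : ∀ p ∈ G, f p.1 = p.2 := fun p hp => by
    obtain ⟨ρ, hρ⟩ := hloc {p, (p.1, f p.1)} (Set.pair_subset hp (hf p.1)) (Set.toFinite _)
    exact (hρ (p.1, f p.1) (by simp)).symm.trans (hρ p (by simp))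
  obtain ⟨τ, rfl⟩ := exists_aut_eq_of_locally_aut (f := f)
    (fun X hX => by
      obtain ⟨ρ, hρ⟩ := hloc ((fun x => (x, f x)) '' X)
        (Set.image_subset_iff.mpr fun x _ => hf x) (hX.image _)
      exact ⟨ρ, fun x hx => hρ _ ⟨x, hx, rfl⟩⟩)
    (fun y => (hran y).imp fun x hx => hfG _ hx)
  exact ⟨τ, hfG⟩

end LocallyAut

section PartialAut

variable {L : Language} {M : Type*} [L.Structure M]

/-- A nonempty basic open set `{ρ | ∀ p ∈ graph, ρ p.1 = p.2}` of `Aut(M)`; a larger graph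
is a smaller open set. -/
structure FinitePartialAut (L : Language) (M : Type*) [L.Structure M] where
  graph : Set (M × M)
  finite : graph.Finite
  exists_aut : ∃ ρ : M ≃[L] M, ∀ p ∈ graph, ρ p.1 = p.2

instance : Preorder (FinitePartialAut L M) := Preorder.lift FinitePartialAut.graph

namespace FinitePartialAut

theorem exists_le_of_aut (p : FinitePartialAut L M) {s : Set (M × M)} (hs : s.Finite)
    (ρ : M ≃[L] M) (hρ : ∀ x ∈ p.graph ∪ s, ρ x.1 = x.2) : ∃ q, p ≤ q ∧ s ⊆ q.graph :=
  ⟨⟨p.graph ∪ s, p.finite.union hs, ρ, hρ⟩, Set.subset_union_left, Set.subset_union_right⟩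

def domCofinal (m : M) : Order.Cofinal (FinitePartialAut L M) where
  carrier := {q | ∃ y, (m, y) ∈ q.graph}
  isCofinal p := by
    obtain ⟨ρ, hρ⟩ := p.exists_aut
    obtain ⟨q, hpq, hq⟩ := p.exists_le_of_aut (Set.finite_singleton (m, ρ m)) ρ (by
      rintro x (hx | rfl)
      exacts [hρ x hx, rfl])
    exact ⟨q, ⟨ρ m, hq rfl⟩, hpq⟩

def ranCofinal (m : M) : Order.Cofinal (FinitePartialAut L M) where
  carrier := {q | ∃ x, (x, m) ∈ q.graph}
  isCofinal p := by
    obtain ⟨ρ, hρ⟩ := p.exists_aut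
    obtain ⟨q, hpq, hq⟩ := p.exists_le_of_aut (Set.finite_singleton (ρ.symm m, m)) ρ (by
      rintro x (hx | rfl)
      exacts [hρ x hx, ρ.apply_symm_apply m])
    exact ⟨q, ⟨ρ.symm m, hq rfl⟩, hpq⟩

def iterateCofinal
    (hhom : ∀ (k : ℕ) (x y : Fin k → M), sameTypeL L x y → ∃ τ : M ≃[L] M, ∀ i, τ (x i) = y i)
    (σ : M ≃[L] M)
    (hrep : ∀ (k : ℕ) (c : Fin k → M), ∃ n : ℕ,
      nonSplitL L c ((⇑σ)^[n] ∘ c) ∧ nonSplitL L ((⇑σ)^[n] ∘ c) c)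
    (r : (k : ℕ) × (Fin k → M) × (Fin k → M)) : Order.Cofinal (FinitePartialAut L M) where
  carrier := {q | (∃ ρ : M ≃[L] M, ∀ i, ρ (r.2.1 i) = r.2.2 i) →
    ∃ n : ℕ, ∀ i, ((⇑σ)^[n] (r.2.1 i), (⇑σ)^[n] (r.2.2 i)) ∈ q.graph}
  isCofinal p := by
    by_cases hab : ∃ ρ : M ≃[L] M, ∀ i, ρ (r.2.1 i) = r.2.2 i
    case neg => exact ⟨p, fun h => absurd h hab, le_rfl⟩
    obtain ⟨ρ₁, hρ₁⟩ := hab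
    obtain ⟨K, f, -, hf⟩ := p.finite.fin_param
    obtain ⟨ρ₀, hρ₀⟩ := p.exists_aut
    obtain ⟨n, ρ, hρc, hρa⟩ := exists_aut_extending_iterate hhom σ hrep
      (sameTypeL_of_aut ρ₀ fun i => hρ₀ (f i) (hf ▸ ⟨i, rfl⟩)) (sameTypeL_of_aut ρ₁ hρ₁)
    obtain ⟨q, hpq, hq⟩ := p.exists_le_of_aut
      (Set.finite_range fun i => ((⇑σ)^[n] (r.2.1 i), (⇑σ)^[n] (r.2.2 i))) ρ (by
        rintro x (hx | ⟨i, rfl⟩)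
        · obtain ⟨i, rfl⟩ := hf ▸ hx
          exact hρc i
        · exact hρa i)
    exact ⟨q, fun _ => ⟨n, fun i => hq ⟨i, rfl⟩⟩, hpq⟩

theorem exists_aut_of_subset_iUnion (I : Order.Ideal (FinitePartialAut L M))
    {s : Set (M × M)} (hs : s.Finite) (hsI : s ⊆ ⋃ q ∈ I, q.graph) :
    ∃ ρ : M ≃[L] M, ∀ p ∈ s, ρ p.1 = p.2 := by
  obtain ⟨q, -, hsq⟩ := DirectedOn.exists_mem_subset_of_finset_subset_biUnion I.nonempty
    I.directed (s := hs.toFinset) (by rwa [hs.coe_toFinset])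
  obtain ⟨ρ, hρ⟩ := q.exists_aut
  exact ⟨ρ, fun p hp => hρ p (hsq (hs.mem_toFinset.mpr hp))⟩

end FinitePartialAut

theorem exists_aut_iterate_mapsTo [Countable M]
    (hhom : ∀ (k : ℕ) (x y : Fin k → M), sameTypeL L x y → ∃ τ : M ≃[L] M, ∀ i, τ (x i) = y i)
    (σ : M ≃[L] M)
    (hrep : ∀ (k : ℕ) (c : Fin k → M), ∃ n : ℕ,
      nonSplitL L c ((⇑σ)^[n] ∘ c) ∧ nonSplitL L ((⇑σ)^[n] ∘ c) c) :
    ∃ τ : M ≃[L] M, ∀ (k : ℕ) (a b : Fin k → M), (∃ ρ : M ≃[L] M, ∀ i, ρ (a i) = b i) →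
      ∃ n : ℕ, ∀ i, τ ((⇑σ)^[n] (a i)) = (⇑σ)^[n] (b i) := by
  let ι := M ⊕ M ⊕ ((k : ℕ) × (Fin k → M) × (Fin k → M))
  have : Encodable ι := Encodable.ofCountable ι
  let 𝒟 : ι → Order.Cofinal (FinitePartialAut L M) :=
    Sum.elim FinitePartialAut.domCofinal
      (Sum.elim FinitePartialAut.ranCofinal (FinitePartialAut.iterateCofinal hhom σ hrep))
  let p₀ : FinitePartialAut L M := ⟨∅, Set.finite_empty, σ, by simp⟩
  let I := Order.idealOfCofinals p₀ 𝒟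
  have meets (i : ι) : ∃ q ∈ 𝒟 i, q ∈ I := Order.cofinal_meets_idealOfCofinals p₀ 𝒟 i
  have hG {q} (hq : q ∈ I) : q.graph ⊆ ⋃ q ∈ I, q.graph := Set.subset_biUnion_of_mem hq
  obtain ⟨τ, hτ⟩ := exists_aut_of_locally_aut_rel
    (fun s hs hfin => FinitePartialAut.exists_aut_of_subset_iUnion I hfin hs)
    (fun m => by
      obtain ⟨q, ⟨y, hy⟩, hq⟩ := meets (Sum.inl m)
      exact ⟨y, hG hq hy⟩)
    (fun m => by
      obtain ⟨q, ⟨x, hx⟩, hq⟩ := meets (Sum.inr (Sum.inl m))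
      exact ⟨x, hG hq hx⟩)
  refine ⟨τ, fun k a b hab => ?_⟩
  obtain ⟨q, hq_mem, hq⟩ := meets (Sum.inr (Sum.inr ⟨k, a, b⟩))
  obtain ⟨n, hn⟩ := hq_mem hab
  exact ⟨n, fun i => hτ _ (hG hq (hn i))⟩

end PartialAut

/-- If the automorphism group of a countable homogeneous structure `M` contains a
repulsive automorphism `σ`, then it has a cyclically dense conjugacy class: there is `τ`
with `{σⁿ τ σ⁻ⁿ : n ∈ ℤ}` dense; in particular `Aut(M)` is topologically 2-generated
(the subgroup generated by `σ` and `τ` is dense).  Density in the pointwise convergence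
topology is expressed via the basic open sets `U_{a,b}`. -/
theorem stmt_17 {L : Language} {M : Type*} [L.Structure M] [Countable M]
    (hhom : ∀ (k : ℕ) (x y : Fin k → M), sameTypeL L x y →
      ∃ τ : M ≃[L] M, ∀ i, τ (x i) = y i)
    (σ : M ≃[L] M)
    (hrep : ∀ (k : ℕ) (c : Fin k → M), ∃ n : ℕ,
      nonSplitL L c ((⇑σ)^[n] ∘ c) ∧ nonSplitL L ((⇑σ)^[n] ∘ c) c) :
    ∃ τ : M ≃[L] M,
      (∀ (k : ℕ) (a b : Fin k → M), (∃ ρ : M ≃[L] M, ∀ i, ρ (a i) = b i) →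
        ∃ n : ℤ, ∀ i,
          (σ.toEquiv ^ n) (τ ((σ.toEquiv ^ (-n)) (a i))) = b i) ∧
      (∀ (k : ℕ) (a b : Fin k → M), (∃ ρ : M ≃[L] M, ∀ i, ρ (a i) = b i) →
        ∃ γ ∈ Subgroup.closure ({σ.toEquiv, τ.toEquiv} : Set (Equiv.Perm M)),
          ∀ i, γ (a i) = b i) := by
  obtain ⟨τ, hτ⟩ := exists_aut_iterate_mapsTo hhom σ hrep
  have hconj : ∀ (k : ℕ) (a b : Fin k → M), (∃ ρ : M ≃[L] M, ∀ i, ρ (a i) = b i) →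
      ∃ n : ℤ, ∀ i, (σ.toEquiv ^ n) (τ ((σ.toEquiv ^ (-n)) (a i))) = b i := by
    intro k a b hab
    obtain ⟨n, hn⟩ := hτ k a b hab
    refine ⟨-n, fun i => ?_⟩
    rw [neg_neg, zpow_neg, zpow_natCast, Equiv.Perm.inv_eq_iff_eq]
    exact hn i
  refine ⟨τ, hconj, fun k a b hab => ?_⟩
  obtain ⟨n, hn⟩ := hconj k a b hab
  have hσ := Subgroup.subset_closure (Set.mem_insert σ.toEquiv {τ.toEquiv})
  have hτ := Subgroup.subset_closure (Set.mem_insert_of_mem σ.toEquiv (Set.mem_singleton τ.toEquiv))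
  exact ⟨σ.toEquiv ^ n * τ.toEquiv * σ.toEquiv ^ (-n),
    mul_mem (mul_mem (zpow_mem hσ n) hτ) (zpow_mem hσ (-n)), hn⟩
end
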